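/- Let 0 < L < d₃ with d₃² < 3L², and set ρ₁ = 3L² − d₃². Define f on the interval I = [(d₃ − L)/2, (d₃ + L)/2] by f(d₁) = (1 − (2d₁ − d₃)²/L²) / (d₁³ (d₃ − d₁)³). Then the set of points of I at which f attains its global maximum is exactly { d₃/2 − √(2ρ₁)/4 , d₃/2 + √(2ρ₁)/4 }, the interior critical points of f are exactly d₃/2 and d₃/2 ± √(2ρ₁)/4, and d₁ = d₃/2 is a strict local minimum of f. -/

import Mathlib

/-!
Writing `u = (d₁ - d₃/2)²`, the identity `d₁ (d₃ - d₁) = d₃²/4 - u` makes `f` a function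
of `u` alone, `(1 - 4u/L²) / (d₃²/4 - u)³`, whose derivative is
`(ρ₁ - 8u) / (L² (d₃²/4 - u)⁴)`. This profile therefore increases up to `u = ρ₁/8` and
decreases afterwards, and the interval `I` is `u ≤ L²/4`, which contains `ρ₁/8` because
`L < d₃`. So `f` is maximal exactly where `u = ρ₁/8`; by the chain rule its critical points
are those two points and `d₁ = d₃/2`, where the factor `2 (d₁ - d₃/2)` vanishes; and `d₃/2`
is a strict local minimum because `u = 0` lies on the increasing branch.
-/

open Set Topology

section

variable {x c s : ℝ}

theorem sq_sub_eq_sq_iff : (x - c) ^ 2 = s ^ 2 ↔ x = c - s ∨ x = c + s := by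
  rw [sq_eq_sq_iff_eq_or_eq_neg]
  constructor <;> rintro (h | h) <;> [right; left; right; left] <;> linarith

end

noncomputable def quadraticGain (d L x : ℝ) : ℝ :=
  (1 - (2 * x - d) ^ 2 / L ^ 2) / (x ^ 3 * (d - x) ^ 3)

noncomputable def quadraticGainProfile (d L u : ℝ) : ℝ :=
  (1 - 4 * u / L ^ 2) / (d ^ 2 / 4 - u) ^ 3

section

variable {d L : ℝ}

theorem mem_Icc_iff_sq_sub_le {x : ℝ} (hL : 0 ≤ L) :
    x ∈ Icc ((d - L) / 2) ((d + L) / 2) ↔ (x - d / 2) ^ 2 ≤ (L / 2) ^ 2 := by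
  rw [sq_le_sq, abs_of_nonneg (by positivity : 0 ≤ L / 2), abs_le, mem_Icc]
  constructor <;> rintro ⟨h₁, h₂⟩ <;> constructor <;> linarith

theorem mem_Ioo_iff_sq_sub_lt {x : ℝ} (hL : 0 ≤ L) :
    x ∈ Ioo ((d - L) / 2) ((d + L) / 2) ↔ (x - d / 2) ^ 2 < (L / 2) ^ 2 := by
  rw [sq_lt_sq, abs_of_nonneg (by positivity : 0 ≤ L / 2), abs_lt, mem_Ioo]
  constructor <;> rintro ⟨h₁, h₂⟩ <;> constructor <;> linarith

theorem quadraticGain_eq_profile (x : ℝ) :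
    quadraticGain d L x = quadraticGainProfile d L ((x - d / 2) ^ 2) := by
  unfold quadraticGain quadraticGainProfile
  ring

theorem hasDerivAt_quadraticGainProfile (hL : L ≠ 0) {u : ℝ} (hu : u ≠ d ^ 2 / 4) :
    HasDerivAt (quadraticGainProfile d L)
      ((3 * L ^ 2 - d ^ 2 - 8 * u) / (L ^ 2 * (d ^ 2 / 4 - u) ^ 4)) u := by
  have hu' : d ^ 2 / 4 - u ≠ 0 := sub_ne_zero.2 hu.symm
  have hnum : HasDerivAt (fun u => 1 - 4 * u / L ^ 2) (-(4 * 1 / L ^ 2)) u :=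
    (((hasDerivAt_id u).const_mul 4).div_const _).const_sub 1
  have hden : HasDerivAt (fun u => (d ^ 2 / 4 - u) ^ 3) (3 * (d ^ 2 / 4 - u) ^ 2 * (-1)) u := by
    simpa using ((hasDerivAt_id u).const_sub (d ^ 2 / 4)).fun_pow 3
  refine (hnum.fun_div hden (pow_ne_zero 3 hu')).congr_deriv ?_
  field_simp
  ring

theorem quadraticGainProfile_strictMonoOn (hL : L ≠ 0) (hLd : L ^ 2 < d ^ 2) :
    StrictMonoOn (quadraticGainProfile d L) (Iic ((3 * L ^ 2 - d ^ 2) / 8)) := by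
  have hderiv : ∀ u ∈ Iic ((3 * L ^ 2 - d ^ 2) / 8), HasDerivAt (quadraticGainProfile d L)
      ((3 * L ^ 2 - d ^ 2 - 8 * u) / (L ^ 2 * (d ^ 2 / 4 - u) ^ 4)) u := fun u hu =>
    hasDerivAt_quadraticGainProfile hL (by rw [mem_Iic] at hu; linarith)
  refine strictMonoOn_of_deriv_pos (convex_Iic _)
    (fun u hu => (hderiv u hu).continuousAt.continuousWithinAt) fun u hu => ?_
  rw [interior_Iic, mem_Iio] at hu
  rw [(hderiv u hu.le).deriv]
  have : 0 < d ^ 2 / 4 - u := by linarith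
  exact div_pos (by linarith) (mul_pos (sq_pos_of_ne_zero hL) (pow_pos this 4))

theorem quadraticGainProfile_strictAntiOn (hL : L ≠ 0) :
    StrictAntiOn (quadraticGainProfile d L) (Ico ((3 * L ^ 2 - d ^ 2) / 8) (d ^ 2 / 4)) := by
  have hderiv : ∀ u ∈ Ico ((3 * L ^ 2 - d ^ 2) / 8) (d ^ 2 / 4),
      HasDerivAt (quadraticGainProfile d L)
        ((3 * L ^ 2 - d ^ 2 - 8 * u) / (L ^ 2 * (d ^ 2 / 4 - u) ^ 4)) u := fun u hu =>
    hasDerivAt_quadraticGainProfile hL hu.2.ne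
  refine strictAntiOn_of_deriv_neg (convex_Ico _ _)
    (fun u hu => (hderiv u hu).continuousAt.continuousWithinAt) fun u hu => ?_
  rw [interior_Ico] at hu
  rw [(hderiv u (Ioo_subset_Ico_self hu)).deriv]
  have : 0 < d ^ 2 / 4 - u := by linarith [hu.2]
  exact div_neg_of_neg_of_pos (by linarith [hu.1])
    (mul_pos (sq_pos_of_ne_zero hL) (pow_pos this 4))

theorem quadraticGainProfile_lt_crit (hL : L ≠ 0) (hLd : L ^ 2 < d ^ 2) {u : ℝ}
    (hu : u < d ^ 2 / 4) (hne : u ≠ (3 * L ^ 2 - d ^ 2) / 8) :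
    quadraticGainProfile d L u < quadraticGainProfile d L ((3 * L ^ 2 - d ^ 2) / 8) := by
  rcases hne.lt_or_gt with hlt | hgt
  · exact quadraticGainProfile_strictMonoOn hL hLd hlt.le self_mem_Iic hlt
  · exact quadraticGainProfile_strictAntiOn hL ⟨le_rfl, by linarith⟩ ⟨hgt.le, hu⟩ hgt

theorem quadraticGainProfile_le_crit (hL : L ≠ 0) (hLd : L ^ 2 < d ^ 2) {u : ℝ}
    (hu : u < d ^ 2 / 4) :
    quadraticGainProfile d L u ≤ quadraticGainProfile d L ((3 * L ^ 2 - d ^ 2) / 8) := by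
  rcases eq_or_ne u ((3 * L ^ 2 - d ^ 2) / 8) with rfl | hne
  · exact le_rfl
  · exact (quadraticGainProfile_lt_crit hL hLd hu hne).le

theorem hasDerivAt_quadraticGain (hL : L ≠ 0) {x : ℝ} (hx : (x - d / 2) ^ 2 ≠ d ^ 2 / 4) :
    HasDerivAt (quadraticGain d L) ((3 * L ^ 2 - d ^ 2 - 8 * (x - d / 2) ^ 2) /
      (L ^ 2 * (d ^ 2 / 4 - (x - d / 2) ^ 2) ^ 4) * (2 * (x - d / 2))) x := by
  have hsq : HasDerivAt (fun x => (x - d / 2) ^ 2) (2 * (x - d / 2)) x := by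
    simpa using ((hasDerivAt_id x).sub_const (d / 2)).fun_pow 2
  rw [funext (quadraticGain_eq_profile (d := d) (L := L))]
  exact (hasDerivAt_quadraticGainProfile hL hx).comp x hsq

theorem deriv_quadraticGain_eq_zero_iff (hL : L ≠ 0) {x s : ℝ}
    (hx : (x - d / 2) ^ 2 < d ^ 2 / 4) (hs : s ^ 2 = (3 * L ^ 2 - d ^ 2) / 8) :
    deriv (quadraticGain d L) x = 0 ↔ x = d / 2 - s ∨ x = d / 2 ∨ x = d / 2 + s := by
  have hden : L ^ 2 * (d ^ 2 / 4 - (x - d / 2) ^ 2) ^ 4 ≠ 0 :=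
    (mul_pos (sq_pos_of_ne_zero hL) (pow_pos (by linarith) 4)).ne'
  have hnum : 3 * L ^ 2 - d ^ 2 - 8 * (x - d / 2) ^ 2 = 0 ↔ (x - d / 2) ^ 2 = s ^ 2 := by
    rw [hs]; constructor <;> intro h <;> linarith
  rw [(hasDerivAt_quadraticGain hL hx.ne).deriv, mul_eq_zero, div_eq_zero_iff, or_iff_left hden,
    mul_eq_zero, or_iff_right two_ne_zero, hnum, sq_sub_eq_sq_iff, sub_eq_zero]
  tauto

theorem quadraticGain_maximizers_eq (hL : 0 < L) (hLd : L ^ 2 < d ^ 2) {s : ℝ}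
    (hs : s ^ 2 = (3 * L ^ 2 - d ^ 2) / 8) :
    {x ∈ Icc ((d - L) / 2) ((d + L) / 2) |
        ∀ y ∈ Icc ((d - L) / 2) ((d + L) / 2), quadraticGain d L y ≤ quadraticGain d L x} =
      {d / 2 - s, d / 2 + s} := by
  have hI : ∀ y ∈ Icc ((d - L) / 2) ((d + L) / 2), (y - d / 2) ^ 2 < d ^ 2 / 4 := fun y hy => by
    have := (mem_Icc_iff_sq_sub_le hL.le).1 hy
    nlinarith
  have hcrit : ∀ x, (x - d / 2) ^ 2 = s ^ 2 →
      x ∈ Icc ((d - L) / 2) ((d + L) / 2) ∧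
        quadraticGain d L x = quadraticGainProfile d L ((3 * L ^ 2 - d ^ 2) / 8) := fun x hx => by
    rw [mem_Icc_iff_sq_sub_le hL.le, quadraticGain_eq_profile, hx, hs]
    exact ⟨by nlinarith, rfl⟩
  ext x
  simp only [mem_ofPred_eq, mem_insert_iff, mem_singleton_iff, ← sq_sub_eq_sq_iff]
  constructor
  · rintro ⟨hx, hmax⟩
    by_contra hne
    rw [hs] at hne
    have hlt := quadraticGainProfile_lt_crit hL.ne' hLd (hI x hx) hne
    obtain ⟨hmem, hval⟩ := hcrit (d / 2 + s) (by ring)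
    have := hmax _ hmem
    rw [hval, quadraticGain_eq_profile] at this
    exact this.not_gt hlt
  · intro hx
    refine ⟨(hcrit x hx).1, fun y hy => ?_⟩
    rw [(hcrit x hx).2, quadraticGain_eq_profile]
    exact quadraticGainProfile_le_crit hL.ne' hLd (hI y hy)

theorem quadraticGain_criticalPoints_eq (hL : 0 < L) (hLd : L ^ 2 < d ^ 2) {s : ℝ}
    (hs : s ^ 2 = (3 * L ^ 2 - d ^ 2) / 8) :
    {x ∈ Ioo ((d - L) / 2) ((d + L) / 2) | deriv (quadraticGain d L) x = 0} =
      {d / 2 - s, d / 2, d / 2 + s} := by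
  have hI : ∀ x ∈ Ioo ((d - L) / 2) ((d + L) / 2), (x - d / 2) ^ 2 < d ^ 2 / 4 := fun x hx => by
    have := (mem_Ioo_iff_sq_sub_lt hL.le).1 hx
    nlinarith
  ext x
  simp only [mem_ofPred_eq, mem_insert_iff, mem_singleton_iff]
  constructor
  · rintro ⟨hx, hdx⟩
    exact (deriv_quadraticGain_eq_zero_iff hL.ne' (hI x hx) hs).1 hdx
  · intro hx
    have hmem : x ∈ Ioo ((d - L) / 2) ((d + L) / 2) := by
      rw [mem_Ioo_iff_sq_sub_lt hL.le]
      rcases hx with rfl | rfl | rfl <;> ring_nf <;> nlinarith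
    exact ⟨hmem, (deriv_quadraticGain_eq_zero_iff hL.ne' (hI x hmem) hs).2 hx⟩

theorem eventually_quadraticGain_midpoint_lt (hL : L ≠ 0) (hLd : L ^ 2 < d ^ 2)
    (hd : d ^ 2 < 3 * L ^ 2) :
    ∀ᶠ y in 𝓝[≠] (d / 2), quadraticGain d L (d / 2) < quadraticGain d L y := by
  have hnear : ∀ᶠ y in 𝓝 (d / 2), (y - d / 2) ^ 2 < (3 * L ^ 2 - d ^ 2) / 8 := by
    refine ContinuousAt.eventually_lt (by fun_prop) continuousAt_const ?_
    rw [sub_self, zero_pow two_ne_zero]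
    linarith
  filter_upwards [nhdsWithin_le_nhds hnear, self_mem_nhdsWithin] with y hy hne
  rw [quadraticGain_eq_profile, quadraticGain_eq_profile, sub_self, zero_pow two_ne_zero]
  exact quadraticGainProfile_strictMonoOn hL hLd (by rw [mem_Iic]; linarith) hy.le
    (sq_pos_of_ne_zero (sub_ne_zero.2 hne))

end

theorem optimal_placement_quadratic (d₃ L ρ₁ : ℝ) (hL : 0 < L) (hLd : L < d₃)
    (hd₃L : d₃ ^ 2 < 3 * L ^ 2) (hρ₁ : ρ₁ = 3 * L ^ 2 - d₃ ^ 2)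
    (f : ℝ → ℝ)
    (hf : ∀ x, f x = (1 - (2 * x - d₃) ^ 2 / L ^ 2) / (x ^ 3 * (d₃ - x) ^ 3)) :
    ({x ∈ Set.Icc ((d₃ - L) / 2) ((d₃ + L) / 2) |
        ∀ y ∈ Set.Icc ((d₃ - L) / 2) ((d₃ + L) / 2), f y ≤ f x} =
      {d₃ / 2 - Real.sqrt (2 * ρ₁) / 4, d₃ / 2 + Real.sqrt (2 * ρ₁) / 4}) ∧
    ({x ∈ Set.Ioo ((d₃ - L) / 2) ((d₃ + L) / 2) | deriv f x = 0} =
      {d₃ / 2 - Real.sqrt (2 * ρ₁) / 4, d₃ / 2, d₃ / 2 + Real.sqrt (2 * ρ₁) / 4}) ∧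
    (∀ᶠ y in nhdsWithin (d₃ / 2) {d₃ / 2}ᶜ, f (d₃ / 2) < f y) := by
  obtain rfl : f = quadraticGain d₃ L := funext hf
  have hLd₃ : L ^ 2 < d₃ ^ 2 := pow_lt_pow_left₀ hLd hL.le two_ne_zero
  have hs : (√(2 * ρ₁) / 4) ^ 2 = (3 * L ^ 2 - d₃ ^ 2) / 8 := by
    rw [div_pow, Real.sq_sqrt (by linarith), hρ₁]
    ring
  exact ⟨quadraticGain_maximizers_eq hL hLd₃ hs, quadraticGain_criticalPoints_eq hL hLd₃ hs,
    eventually_quadraticGain_midpoint_lt hL.ne' hLd₃ hd₃L⟩
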